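/- Let n ≥ 2 be an integer and a > 0, and let f(a,·) be the maximal solution of f'' = (n−1)(1+(f')²)·coth(f), f(0) = a, f'(0) = 0, defined on I_a = (−T(a), T(a)). Then the restriction of f(a,·) to [0, T(a)) is a bijection from [0, T(a)) onto [a, ∞), and its inverse function is λ(a,·) given by λ(a,ρ) = sinh^{n−1}(a) · ∫_a^ρ (sinh^{2n−2}(u) − sinh^{2n−2}(a))^{−1/2} du for ρ ∈ [a, ∞); that is, f(a, λ(a,ρ)) = ρ for every ρ ≥ a and λ(a, f(a,t)) = t for every t ∈ [0, T(a)). -/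

import Mathlib

/-- `T n a = sinh^{n-1}(a) · ∫_a^∞ (sinh^{2n-2}(u) − sinh^{2n-2}(a))^{-1/2} du`. -/
noncomputable def T (n : ℕ) (a : ℝ) : ℝ :=
  Real.sinh a ^ (n - 1) *
    ∫ u in Set.Ioi a,
      (Real.sinh u ^ (2 * n - 2) - Real.sinh a ^ (2 * n - 2)) ^ (-(1 : ℝ) / 2)

/-- `f` solves the catenary ODE `f'' = (n-1)(1+(f')²) coth(f)` on the set `I`,
with initial conditions `f(0) = a`, `f'(0) = 0`. -/
def IsCatenarySolOn (n : ℕ) (a : ℝ) (I : Set ℝ) (f : ℝ → ℝ) : Prop :=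
  (0 : ℝ) ∈ I ∧ f 0 = a ∧ deriv f 0 = 0 ∧
    ∀ t ∈ I, HasDerivAt f (deriv f t) t ∧
      HasDerivAt (deriv f)
        (((n : ℝ) - 1) * (1 + deriv f t ^ 2) * (Real.cosh (f t) / Real.sinh (f t))) t

/-- `lam n a ρ = sinh^{n-1}(a) · ∫_a^ρ (sinh^{2n-2}(u) − sinh^{2n-2}(a))^{-1/2} du`. -/
noncomputable def lam (n : ℕ) (a : ℝ) (ρ : ℝ) : ℝ :=
  Real.sinh a ^ (n - 1) *
    ∫ u in a..ρ,
      (Real.sinh u ^ (2 * n - 2) - Real.sinh a ^ (2 * n - 2)) ^ (-(1 : ℝ) / 2)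

/-!
Wherever `f > 0`, the quantity `(1 + f'²) / sinh^{2n-2} f` is a first integral of the equation,
so `(sinh^{n-1} a · f')² = sinh^{2n-2} f - sinh^{2n-2} a`. Hence `f ≥ a` as long as `f > 0`, and
by continuity on all of `[0, T(a))`; there `f'' > 0`, so `f' > 0` on `(0, T(a))`. Separating
variables, `λ(a, f t)` has derivative `1` on `(0, T(a))` and vanishes at `0`, so
`λ(a, ·) ∘ f = id`. The integrand of `λ` is `O((u - a)^{-1/2})` at `a` and `O(e^{-u/2})` at
infinity, so `λ(a, ·)` is a strictly increasing continuous map `[a, ∞) → [0, T(a))`, and its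
injectivity gives `f ∘ λ(a, ·) = id`.
-/

open Real MeasureTheory Set Filter Topology

theorem sub_le_sinh_sub {x y : ℝ} (h : x ≤ y) : y - x ≤ sinh y - sinh x := by
  simpa using mul_sub_le_image_sub_of_le_deriv differentiable_sinh (C := 1)
    (fun x => by rw [Real.deriv_sinh]; exact one_le_cosh x) h

theorem exp_div_four_le_sinh_sub {a u : ℝ} (h : a + 1 ≤ u) : exp u / 4 ≤ sinh u - sinh a := by
  have he : exp (u - 1) ≤ exp u / 2 := by
    rw [exp_sub, div_le_div_iff_of_pos_left (exp_pos u) (exp_pos 1) two_pos]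
    linarith [add_one_le_exp (1 : ℝ)]
  have h1 : sinh a ≤ sinh (u - 1) := sinh_le_sinh.2 (by linarith)
  have h2 : exp (-u) ≤ exp (-(u - 1)) := exp_le_exp.2 (by linarith)
  rw [sinh_eq, sinh_eq] at *
  linarith

theorem integrableOn_sinh_sub_sinh_rpow (a : ℝ) :
    IntegrableOn (fun u => (sinh u - sinh a) ^ (-(1 : ℝ) / 2)) (Ioi a) := by
  have hmeas : AEStronglyMeasurable (fun u => (sinh u - sinh a) ^ (-(1 : ℝ) / 2)) :=
    ((continuous_sinh.sub continuous_const).measurable.pow_const _).aestronglyMeasurable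
  rw [← Ioc_union_Ioi_eq_Ioi (le_add_of_nonneg_right zero_le_one)]
  refine IntegrableOn.union ?_ ?_
  · have hmaj : IntegrableOn (fun u => (u - a) ^ (-(1 : ℝ) / 2)) (Ioc a (a + 1)) := by
      have := (intervalIntegral.intervalIntegrable_rpow' (a := 0) (b := 1)
        (r := -(1 : ℝ) / 2) (by norm_num)).comp_sub_right a
      simpa [add_comm] using this.1
    refine hmaj.mono' hmeas.restrict ((ae_restrict_iff' measurableSet_Ioc).2 (ae_of_all _ ?_))
    intro u hu
    have hd := sub_le_sinh_sub hu.1.le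
    rw [norm_of_nonneg (rpow_nonneg (by linarith [hu.1]) _)]
    exact rpow_le_rpow_of_nonpos (by linarith [hu.1]) hd (by norm_num)
  · have hmaj : IntegrableOn (fun u => 2 * exp (-(1 / 2) * u)) (Ioi (a + 1)) :=
      (exp_neg_integrableOn_Ioi _ (by norm_num)).const_mul 2
    refine hmaj.mono' hmeas.restrict ((ae_restrict_iff' measurableSet_Ioi).2 (ae_of_all _ ?_))
    intro u hu
    have hd := exp_div_four_le_sinh_sub (le_of_lt hu)
    have hq : 0 < exp u / 4 := by positivity
    rw [norm_of_nonneg (rpow_nonneg (hq.le.trans hd) _)]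
    calc (sinh u - sinh a) ^ (-(1 : ℝ) / 2) ≤ (exp u / 4) ^ (-(1 : ℝ) / 2) :=
          rpow_le_rpow_of_nonpos hq hd (by norm_num)
      _ = 2 * exp (-(1 / 2) * u) := by
          have h4 : (4 : ℝ) ^ (-(1 : ℝ) / 2) = 1 / 2 := by
            rw [show (4 : ℝ) = 2 ^ (2 : ℝ) by norm_num, ← rpow_mul (by norm_num)]
            norm_num
          rw [div_rpow (exp_pos u).le (by norm_num), ← exp_mul, h4]
          ring_nf

theorem pow_mul_sub_le_pow_succ_sub_pow_succ {x y : ℝ} (hy : 0 ≤ y) (hyx : y ≤ x) (m : ℕ) :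
    y ^ m * (x - y) ≤ x ^ (m + 1) - y ^ (m + 1) := by
  have := pow_le_pow_left₀ hy hyx m
  rw [pow_succ, pow_succ]
  nlinarith

theorem mul_rpow_neg_half_eq_one_of_sq_eq {x y : ℝ} (hy : 0 < y) (h : y ^ 2 = x) :
    y * x ^ (-(1 : ℝ) / 2) = 1 := by
  rw [← h, ← rpow_natCast, ← rpow_mul hy.le]
  norm_num [rpow_neg_one, hy.ne']

noncomputable def lamIntegrand (k : ℕ) (a u : ℝ) : ℝ :=
  (sinh u ^ k - sinh a ^ k) ^ (-(1 : ℝ) / 2)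

section lamIntegrand

variable {k : ℕ} {a u : ℝ}

theorem lamIntegrand_nonneg (ha : 0 ≤ a) (hu : a ≤ u) : 0 ≤ lamIntegrand k a u :=
  rpow_nonneg (sub_nonneg.2 (pow_le_pow_left₀ (sinh_nonneg_iff.2 ha) (sinh_le_sinh.2 hu) _)) _

theorem sinh_pow_sub_sinh_pow_pos (hk : k ≠ 0) (ha : 0 ≤ a) (hu : a < u) :
    0 < sinh u ^ k - sinh a ^ k :=
  sub_pos.2 (pow_lt_pow_left₀ (sinh_lt_sinh.2 hu) (sinh_nonneg_iff.2 ha) hk)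

theorem lamIntegrand_pos (hk : k ≠ 0) (ha : 0 ≤ a) (hu : a < u) : 0 < lamIntegrand k a u :=
  rpow_pos_of_pos (sinh_pow_sub_sinh_pow_pos hk ha hu) _

theorem continuousAt_lamIntegrand (hk : k ≠ 0) (ha : 0 ≤ a) (hu : a < u) :
    ContinuousAt (lamIntegrand k a) u :=
  ((continuous_sinh.pow k).sub continuous_const).continuousAt.rpow_const
    (Or.inl (sinh_pow_sub_sinh_pow_pos hk ha hu).ne')

theorem measurable_lamIntegrand : Measurable (lamIntegrand k a) :=
  ((continuous_sinh.pow k).sub continuous_const).measurable.pow_const _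

theorem integrableOn_lamIntegrand (hk : k ≠ 0) (ha : 0 < a) :
    IntegrableOn (lamIntegrand k a) (Ioi a) := by
  obtain ⟨m, rfl⟩ := Nat.exists_eq_succ_of_ne_zero hk
  have hc : 0 < sinh a ^ m := pow_pos (sinh_pos_iff.2 ha) m
  refine ((integrableOn_sinh_sub_sinh_rpow a).const_mul ((sinh a ^ m) ^ (-(1 : ℝ) / 2))).mono'
    measurable_lamIntegrand.aestronglyMeasurable.restrict
    ((ae_restrict_iff' measurableSet_Ioi).2 (ae_of_all _ fun u hu => ?_))
  have hd : 0 ≤ sinh u - sinh a := sub_nonneg.2 (sinh_le_sinh.2 (le_of_lt hu))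
  have hlow : sinh a ^ m * (sinh u - sinh a) ≤ sinh u ^ (m + 1) - sinh a ^ (m + 1) :=
    pow_mul_sub_le_pow_succ_sub_pow_succ (sinh_pos_iff.2 ha).le (sinh_le_sinh.2 (le_of_lt hu)) m
  rw [norm_of_nonneg (lamIntegrand_nonneg ha.le (le_of_lt hu)), ← mul_rpow hc.le hd]
  exact rpow_le_rpow_of_nonpos (mul_pos hc (sub_pos.2 (sinh_lt_sinh.2 hu))) hlow (by norm_num)

end lamIntegrand

section lam

variable {n : ℕ} {a ρ : ℝ}

theorem lam_eq (n : ℕ) (a ρ : ℝ) :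
    lam n a ρ = sinh a ^ (n - 1) * ∫ u in a..ρ, lamIntegrand (2 * n - 2) a u := rfl

theorem T_eq (n : ℕ) (a : ℝ) :
    T n a = sinh a ^ (n - 1) * ∫ u in Ioi a, lamIntegrand (2 * n - 2) a u := rfl

@[simp]
theorem lam_self (n : ℕ) (a : ℝ) : lam n a a = 0 := by
  simp [lam]

theorem intervalIntegrable_lamIntegrand (hn : 2 ≤ n) (ha : 0 < a) {x y : ℝ} (hx : a ≤ x)
    (hy : a ≤ y) : IntervalIntegrable (lamIntegrand (2 * n - 2) a) volume x y :=
  (intervalIntegrable_iff.2 ((integrableOn_lamIntegrand (by omega) ha).mono_set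
    fun _ hu => (le_min hx hy).trans_lt hu.1))

theorem lam_strictMonoOn (hn : 2 ≤ n) (ha : 0 < a) : StrictMonoOn (lam n a) (Ici a) := by
  intro x hx y hy hxy
  have hxy_int := intervalIntegrable_lamIntegrand hn ha hx hy
  have hpos : 0 < ∫ u in x..y, lamIntegrand (2 * n - 2) a u :=
    intervalIntegral.intervalIntegral_pos_of_pos_on hxy_int
      (fun u hu => lamIntegrand_pos (by omega) ha.le (hx.trans_lt hu.1)) hxy
  rw [lam_eq, lam_eq, ← intervalIntegral.integral_add_adjacent_intervals
    (intervalIntegrable_lamIntegrand hn ha le_rfl hx) hxy_int]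
  exact mul_lt_mul_of_pos_left (lt_add_of_pos_right _ hpos) (pow_pos (sinh_pos_iff.2 ha) _)

theorem lam_lt_T (hn : 2 ≤ n) (ha : 0 < a) (hρ : a ≤ ρ) : lam n a ρ < T n a := by
  have hint := integrableOn_lamIntegrand (by omega : 2 * n - 2 ≠ 0) ha
  have htail : 0 < ∫ u in Ioi ρ, lamIntegrand (2 * n - 2) a u := by
    rw [setIntegral_pos_iff_support_of_nonneg_ae _ (hint.mono_set (Ioi_subset_Ioi hρ))]
    · have hsupp : Ioi ρ ⊆ Function.support (lamIntegrand (2 * n - 2) a) := fun u hu =>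
        (lamIntegrand_pos (by omega) ha.le (hρ.trans_lt hu)).ne'
      rw [inter_eq_self_of_subset_right hsupp]
      simp
    · filter_upwards [ae_restrict_mem measurableSet_Ioi] with u hu
      exact lamIntegrand_nonneg ha.le (hρ.trans (le_of_lt hu))
  rw [lam_eq, T_eq, intervalIntegral.integral_of_le hρ, ← Ioc_union_Ioi_eq_Ioi hρ,
    setIntegral_union (Ioc_disjoint_Ioi le_rfl) measurableSet_Ioi
      (hint.mono_set Ioc_subset_Ioi_self) (hint.mono_set (Ioi_subset_Ioi hρ))]
  exact mul_lt_mul_of_pos_left (lt_add_of_pos_right _ htail) (pow_pos (sinh_pos_iff.2 ha) _)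

theorem lam_mem_Ico (hn : 2 ≤ n) (ha : 0 < a) (hρ : a ≤ ρ) : lam n a ρ ∈ Ico 0 (T n a) :=
  ⟨lam_self n a ▸ (lam_strictMonoOn hn ha).monotoneOn self_mem_Ici hρ hρ,
    lam_lt_T hn ha hρ⟩

theorem hasDerivAt_lam (hn : 2 ≤ n) (ha : 0 < a) (hρ : a < ρ) :
    HasDerivAt (lam n a) (sinh a ^ (n - 1) * lamIntegrand (2 * n - 2) a ρ) ρ :=
  (intervalIntegral.integral_hasDerivAt_right (intervalIntegrable_lamIntegrand hn ha le_rfl hρ.le)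
    measurable_lamIntegrand.stronglyMeasurable.stronglyMeasurableAtFilter
    (continuousAt_lamIntegrand (by omega) ha.le hρ)).const_mul _

theorem continuousOn_lam (hn : 2 ≤ n) (ha : 0 < a) : ContinuousOn (lam n a) (Ici a) := by
  intro x hx
  have hcont : ContinuousOn (lam n a) (Icc a (x + 1)) := by
    have hax : a ≤ x + 1 := by linarith [mem_Ici.1 hx]
    rw [← uIcc_of_le hax]
    exact (intervalIntegral.continuousOn_primitive_interval'
      (intervalIntegrable_lamIntegrand hn ha le_rfl hax) left_mem_uIcc).const_mul _
  refine (hcont x ⟨hx, by linarith⟩).mono_of_mem_nhdsWithin ?_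
  rw [← Ici_inter_Iic]
  exact inter_mem_nhdsWithin _ (Iic_mem_nhds (by linarith))

end lam

theorem catenary_energy {n : ℕ} (hn : 1 ≤ n) {f f' : ℝ → ℝ} {x y : ℝ} (hxy : x ≤ y)
    (hf : ∀ s ∈ Icc x y, HasDerivAt f (f' s) s)
    (hf' : ∀ s ∈ Icc x y,
      HasDerivAt f' (((n : ℝ) - 1) * (1 + f' s ^ 2) * (cosh (f s) / sinh (f s))) s)
    (hpos : ∀ s ∈ Icc x y, 0 < f s) :
    (1 + f' y ^ 2) * sinh (f x) ^ (2 * n - 2) = (1 + f' x ^ 2) * sinh (f y) ^ (2 * n - 2) := by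
  obtain ⟨m, rfl⟩ : ∃ m, n = m + 1 := ⟨n - 1, by omega⟩
  have hk : 2 * (m + 1) - 2 = 2 * m := by omega
  simp only [hk, Nat.cast_add, Nat.cast_one, add_sub_cancel_right] at hf' ⊢
  set E : ℝ → ℝ := fun s => (1 + f' s ^ 2) / sinh (f s) ^ (2 * m)
  have hE : ∀ s ∈ Icc x y, HasDerivAt E 0 s := by
    intro s hs
    have hS : 0 < sinh (f s) := sinh_pos_iff.2 (hpos s hs)
    have hq := (((hf' s hs).pow 2).const_add 1).div
      (((hasDerivAt_sinh (f s)).comp s (hf s hs)).pow (2 * m)) (pow_ne_zero _ hS.ne')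
    refine hq.congr_deriv ?_
    rw [div_eq_zero_iff]
    left
    rcases m with _ | m
    · simp
    · simp only [Function.comp_apply, Pi.pow_apply]
      rw [show 2 * (m + 1) - 1 = 2 * m + 1 by omega, show 2 * (m + 1) = 2 * m + 1 + 1 by ring,
        pow_succ (sinh (f s)) (2 * m + 1)]
      field_simp
      push_cast
      ring
  have hconst := constant_of_has_deriv_right_zero
    (fun s hs => (hE s hs).continuousAt.continuousWithinAt)
    (fun s hs => (hE s (Ico_subset_Icc_self hs)).hasDerivWithinAt) y (right_mem_Icc.2 hxy)
  have hx : 0 < sinh (f x) ^ (2 * m) := pow_pos (sinh_pos_iff.2 (hpos x (left_mem_Icc.2 hxy))) _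
  have hy : 0 < sinh (f y) ^ (2 * m) := pow_pos (sinh_pos_iff.2 (hpos y (right_mem_Icc.2 hxy))) _
  rw [div_eq_div_iff hy.ne' hx.ne'] at hconst
  linarith

theorem le_of_le_while_pos {f : ℝ → ℝ} {a b : ℝ} (ha : 0 < a)
    (hcont : ContinuousOn f (Ico 0 b)) (h0 : 0 < f 0)
    (hle : ∀ t ∈ Ico 0 b, (∀ s ∈ Icc 0 t, 0 < f s) → a ≤ f t) :
    ∀ t ∈ Ico 0 b, a ≤ f t := by
  intro t ht
  apply hle t ht
  by_contra! hneg
  have hZ : IsClosed (Icc 0 t ∩ f ⁻¹' Iic 0) :=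
    (hcont.mono (Icc_subset_Ico_right ht.2)).preimage_isClosed_of_isClosed isClosed_Icc isClosed_Iic
  -- At the first `m` with `f m ≤ 0`, the hypothesis gives `f ≥ a` on `[0, m)`, hence at `m`.
  obtain ⟨m, ⟨hm, hfm⟩, hmin⟩ :=
    (isCompact_Icc.of_isClosed_subset hZ inter_subset_left).exists_isLeast hneg
  have hm0 : 0 ≠ m := by rintro rfl; exact (h0.trans_le hfm).false
  have hbefore : Ico 0 m ⊆ Icc 0 m ∩ f ⁻¹' Ici a := fun s hs =>
    ⟨Ico_subset_Icc_self hs, hle s ⟨hs.1, hs.2.trans_le hm.2 |>.trans ht.2⟩ fun u hu =>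
      lt_of_not_ge fun hfu => (hu.2.trans_lt hs.2).not_ge
        (hmin ⟨⟨hu.1, hu.2.trans (hs.2.le.trans hm.2)⟩, hfu⟩)⟩
  have hclosed : IsClosed (Icc 0 m ∩ f ⁻¹' Ici a) :=
    (hcont.mono (Icc_subset_Ico_right (hm.2.trans_lt ht.2))).preimage_isClosed_of_isClosed
      isClosed_Icc isClosed_Ici
  have hfm_ge := (hclosed.closure_subset_iff.2 hbefore (by
    rw [closure_Ico hm0]; exact right_mem_Icc.2 hm.1)).2
  exact (ha.trans_le hfm_ge).not_ge hfm

namespace IsCatenarySolOn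

variable {n : ℕ} {a b : ℝ} {I : Set ℝ} {f : ℝ → ℝ}

theorem energy_eq_of_pos (hf : IsCatenarySolOn n a I f) (hI : Ico 0 b ⊆ I) (hn : 1 ≤ n)
    {t : ℝ} (ht : t ∈ Ico 0 b) (hpos : ∀ s ∈ Icc 0 t, 0 < f s) :
    (1 + deriv f t ^ 2) * sinh a ^ (2 * n - 2) = sinh (f t) ^ (2 * n - 2) := by
  obtain ⟨-, hf0, hd0, hode⟩ := hf
  have hsub : Icc 0 t ⊆ I := (Icc_subset_Ico_right ht.2).trans hI
  simpa [hf0, hd0] using catenary_energy hn ht.1 (fun s hs => (hode s (hsub hs)).1)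
    (fun s hs => (hode s (hsub hs)).2) hpos

theorem le_apply (hf : IsCatenarySolOn n a I f) (hI : Ico 0 b ⊆ I) (hn : 2 ≤ n) (ha : 0 < a) :
    ∀ t ∈ Ico 0 b, a ≤ f t := by
  refine le_of_le_while_pos ha
    (fun t ht => (hf.2.2.2 t (hI ht)).1.continuousAt.continuousWithinAt) (hf.2.1 ▸ ha)
    fun t ht hpos => ?_
  have hE := hf.energy_eq_of_pos hI (by omega) ht hpos
  have hft : 0 ≤ sinh (f t) := (sinh_pos_iff.2 (hpos t (right_mem_Icc.2 ht.1))).le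
  have hle : sinh a ^ (2 * n - 2) ≤ sinh (f t) ^ (2 * n - 2) := by
    nlinarith [sq_nonneg (deriv f t), pow_pos (sinh_pos_iff.2 ha) (2 * n - 2)]
  exact sinh_le_sinh.1 ((pow_le_pow_iff_left₀ (sinh_pos_iff.2 ha).le hft (by omega)).1 hle)

theorem energy_eq (hf : IsCatenarySolOn n a I f) (hI : Ico 0 b ⊆ I) (hn : 2 ≤ n) (ha : 0 < a)
    {t : ℝ} (ht : t ∈ Ico 0 b) :
    (1 + deriv f t ^ 2) * sinh a ^ (2 * n - 2) = sinh (f t) ^ (2 * n - 2) :=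
  hf.energy_eq_of_pos hI (by omega) ht fun s hs =>
    ha.trans_le (hf.le_apply hI hn ha s ⟨hs.1, hs.2.trans_lt ht.2⟩)

theorem deriv_pos (hf : IsCatenarySolOn n a I f) (hI : Ico 0 b ⊆ I) (hn : 2 ≤ n) (ha : 0 < a) :
    ∀ t ∈ Ioo 0 b, 0 < deriv f t := by
  have hmono : StrictMonoOn (deriv f) (Ico 0 b) := by
    refine strictMonoOn_of_deriv_pos (convex_Ico 0 b)
      (fun t ht => (hf.2.2.2 t (hI ht)).2.continuousAt.continuousWithinAt) fun t ht => ?_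
    rw [interior_Ico] at ht
    have hft : 0 < sinh (f t) :=
      sinh_pos_iff.2 (ha.trans_le (hf.le_apply hI hn ha t (Ioo_subset_Ico_self ht)))
    have hn1 : (0 : ℝ) < n - 1 := by
      have : (2 : ℝ) ≤ n := by exact_mod_cast hn
      linarith
    rw [(hf.2.2.2 t (hI (Ioo_subset_Ico_self ht))).2.deriv]
    exact mul_pos (mul_pos hn1 (by positivity)) (div_pos (cosh_pos _) hft)
  intro t ht
  simpa [hf.2.2.1] using hmono ⟨le_rfl, ht.1.trans ht.2⟩ (Ioo_subset_Ico_self ht) ht.1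

theorem hasDerivAt_lam_comp (hf : IsCatenarySolOn n a I f) (hI : Ico 0 b ⊆ I) (hn : 2 ≤ n)
    (ha : 0 < a) {t : ℝ} (ht : t ∈ Ioo 0 b) : HasDerivAt (lam n a ∘ f) 1 t := by
  have hd := hf.deriv_pos hI hn ha t ht
  have hE := hf.energy_eq hI hn ha (Ioo_subset_Ico_self ht)
  have hsa : 0 < sinh a := sinh_pos_iff.2 ha
  have hsq : (sinh a ^ (n - 1) * deriv f t) ^ 2 =
      sinh (f t) ^ (2 * n - 2) - sinh a ^ (2 * n - 2) := by
    rw [mul_pow, ← pow_mul, show (n - 1) * 2 = 2 * n - 2 by omega, ← hE]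
    ring
  have hfa : a < f t := by
    have hlt : sinh a ^ (2 * n - 2) < sinh (f t) ^ (2 * n - 2) := by
      nlinarith [pow_pos (mul_pos (pow_pos hsa (n - 1)) hd) 2]
    exact sinh_lt_sinh.1 (lt_of_pow_lt_pow_left₀ _ (sinh_nonneg_iff.2 (ha.trans_le
      (hf.le_apply hI hn ha t (Ioo_subset_Ico_self ht))).le) hlt)
  have hcomp := (hasDerivAt_lam hn ha hfa).comp t (hf.2.2.2 t (hI (Ioo_subset_Ico_self ht))).1
  rwa [mul_right_comm, lamIntegrand,
    mul_rpow_neg_half_eq_one_of_sq_eq (mul_pos (pow_pos hsa _) hd) hsq] at hcomp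

theorem lam_apply (hf : IsCatenarySolOn n a I f) (hI : Ico 0 b ⊆ I) (hn : 2 ≤ n) (ha : 0 < a) :
    ∀ t ∈ Ico 0 b, lam n a (f t) = t := by
  rintro t ⟨ht0, htb⟩
  rcases ht0.eq_or_lt with rfl | ht0
  · simp [hf.2.1]
  have hsub : Icc 0 t ⊆ Ico 0 b := Icc_subset_Ico_right htb
  have hcont : ContinuousOn (lam n a ∘ f) (Icc 0 t) :=
    (continuousOn_lam hn ha).comp
      (fun s hs => (hf.2.2.2 s (hI (hsub hs))).1.continuousAt.continuousWithinAt)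
      fun s hs => hf.le_apply hI hn ha s (hsub hs)
  obtain ⟨-, -, hslope⟩ := exists_hasDerivAt_eq_slope (lam n a ∘ f) (fun _ => 1) ht0 hcont
    fun s hs => hf.hasDerivAt_lam_comp hI hn ha (Ioo_subset_Ioo_right htb.le hs)
  simp only [Function.comp_apply, hf.2.1, lam_self, sub_zero] at hslope
  field_simp at hslope
  exact hslope.symm

end IsCatenarySolOn

/-- The restriction of the maximal solution `f(a,·)` to `[0, T(a))` is a bijection
onto `[a, ∞)`, with inverse function `λ(a,·)` given by
`λ(a,ρ) = sinh^{n-1}(a) · ∫_a^ρ (sinh^{2n-2}(u) − sinh^{2n-2}(a))^{-1/2} du`. -/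
theorem catenary_bijection (n : ℕ) (hn : 2 ≤ n) (a : ℝ) (ha : 0 < a) (f : ℝ → ℝ)
    (hf : IsCatenarySolOn n a (Set.Ioo (-(T n a)) (T n a)) f) :
    Set.BijOn f (Set.Ico (0 : ℝ) (T n a)) (Set.Ici a) ∧
      (∀ ρ : ℝ, a ≤ ρ → f (lam n a ρ) = ρ) ∧
      (∀ t ∈ Set.Ico (0 : ℝ) (T n a), lam n a (f t) = t) := by
  have hI : Ico 0 (T n a) ⊆ Ioo (-(T n a)) (T n a) :=
    fun t ht => ⟨by linarith [hf.1.2, ht.1], ht.2⟩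
  have hleft : ∀ t ∈ Ico 0 (T n a), lam n a (f t) = t := hf.lam_apply hI hn ha
  have hright : ∀ ρ, a ≤ ρ → f (lam n a ρ) = ρ := fun ρ hρ =>
    (lam_strictMonoOn hn ha).injOn (hf.le_apply hI hn ha _ (lam_mem_Ico hn ha hρ)) hρ
      (hleft _ (lam_mem_Ico hn ha hρ))
  exact ⟨InvOn.bijOn ⟨hleft, hright⟩ (hf.le_apply hI hn ha)
    (fun ρ hρ => lam_mem_Ico hn ha hρ), hright, hleft⟩
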